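/- arXiv:2211.07608 — 2 statements merged into one kernel-verified Lean document; each statement's English description precedes it below -/
import Mathlib

section
/- With the notation of the worst-case construction: e = δ(Y − Xᵀβ)/E_P[|Y−Xᵀβ|^r]^{1/r}, X̃ = X − e(β* − (β/⟨β,β⟩)ρ*(β*)), Ỹ = Y + σe, where β* satisfies |⟨γ, β* − (β/⟨β,β⟩)ρ*(β*)⟩| ≤ ρ(γ) for all γ, we have for every γ ∈ ℝ^d: E[|(Ỹ − Y) + (X − X̃)ᵀγ|^r] ≤ (δ(σ + ρ(γ)))^r. Hence the law of (X̃, Ỹ) lies in the ρ-MSW ball of radius δ around P. -/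
open MeasureTheory
open scoped BigOperators

noncomputable section

abbrev Vec (d : ℕ) := Fin d → ℝ
abbrev Pt (d : ℕ) := Vec d × ℝ

/-- Euclidean inner product on `ℝ^d`. -/
def dot {d : ℕ} (x y : Vec d) : ℝ := ∑ j, x j * y j

/-- Couplings of two measures on `ℝ^d × ℝ`. -/
def couplings {d : ℕ} (P Q : Measure (Pt d)) : Set (Measure (Pt d × Pt d)) :=
  {π | π.map Prod.fst = P ∧ π.map Prod.snd = Q}

/-- r-th power prediction error `E_P[|Y - Xᵀβ|^r]`. -/
def lossInt {d : ℕ} (r : ℝ) (β : Vec d) (P : Measure (Pt d)) : ℝ :=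
  ∫ z, |z.2 - dot z.1 β| ^ r ∂P

/-- Prediction error `E_P[|Y - Xᵀβ|^r]^{1/r}`. -/
def predErr {d : ℕ} (r : ℝ) (β : Vec d) (P : Measure (Pt d)) : ℝ :=
  (lossInt r β P) ^ (1 / r)

/-- The ρ-max-sliced Wasserstein metric `Ŵ_{r,ρ,σ}`. -/
def MSW {d : ℕ} (r σ : ℝ) (ρ : Vec d → ℝ) (P Q : Measure (Pt d)) : ℝ :=
  ⨆ γ : Vec d, (⨅ π ∈ couplings P Q,
    (∫ w, |(w.2.2 - w.1.2) + dot (w.1.1 - w.2.1) γ| ^ r ∂π) ^ (1 / r)) / (σ + ρ γ)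

/-- Convex conjugate of ρ (real-valued supremum). -/
def conjR {d : ℕ} (ρ : Vec d → ℝ) (b : Vec d) : ℝ :=
  sSup {t : ℝ | ∃ y, t = dot b y - ρ y}

/-- The adjusted direction β* − (β/⟨β,β⟩) ρ*(β*). -/
def adj {d : ℕ} (ρ : Vec d → ℝ) (β βs : Vec d) : Vec d :=
  fun j => βs j - β j / dot β β * conjR ρ βs

/-- the worst-case perturbation stays in the ρ-MSW ball of radius δ:
for every γ, E[|(Ỹ−Y) + (X−X̃)ᵀγ|^r] ≤ (δ(σ+ρ(γ)))^r, and the law of (X̃, Ỹ)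
lies in the ρ-MSW ball of radius δ around P. -/
theorem worst_case_in_ball {d : ℕ} (r σ δ : ℝ) (hr : 1 ≤ r) (hσ : 1 ≤ σ) (hδ : 0 ≤ δ)
    (ρ : Vec d → ℝ) (hρ : ∀ γ, 0 ≤ ρ γ) (hconv : ConvexOn ℝ Set.univ ρ)
    (P : Measure (Pt d)) [IsProbabilityMeasure P]
    (β βs : Vec d)
    (hsub : ∀ x, ρ β + dot βs (x - β) ≤ ρ x)
    (hcond : ∀ γ, |dot γ (adj ρ β βs)| ≤ ρ γ)
    (hint : Integrable (fun z => |z.2 - dot z.1 β| ^ r) P)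
    (hpos : 0 < lossInt r β P) :
    (∀ γ : Vec d,
      (∫ z, |σ * (δ * (z.2 - dot z.1 β) / predErr r β P) +
          (δ * (z.2 - dot z.1 β) / predErr r β P) * dot (adj ρ β βs) γ| ^ r ∂P)
        ≤ (δ * (σ + ρ γ)) ^ r) ∧
    MSW r σ ρ P (P.map (fun z =>
      ((fun j => z.1 j - (δ * (z.2 - dot z.1 β) / predErr r β P) * adj ρ β βs j : Vec d),
        z.2 + σ * (δ * (z.2 - dot z.1 β) / predErr r β P)))) ≤ δ := by

  have hr0 : (0:ℝ) < r := lt_of_lt_of_le one_pos hr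
  have hLnn : (0:ℝ) ≤ lossInt r β P := hpos.le
  have hpe : 0 < predErr r β P := Real.rpow_pos_of_pos hpos _
  have hper : predErr r β P ^ r = lossInt r β P := by
    rw [predErr, ← Real.rpow_mul hLnn, one_div, inv_mul_cancel₀ hr0.ne', Real.rpow_one]
  -- Part 1
  have key : ∀ γ : Vec d,
      (∫ z, |σ * (δ * (z.2 - dot z.1 β) / predErr r β P) +
          (δ * (z.2 - dot z.1 β) / predErr r β P) * dot (adj ρ β βs) γ| ^ r ∂P)
        ≤ (δ * (σ + ρ γ)) ^ r := by
    intro γ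
    set c := dot (adj ρ β βs) γ with hc
    have hcb : |c| ≤ ρ γ := by
      have : c = dot γ (adj ρ β βs) := by
        simp [hc, dot, mul_comm]
      rw [this]; exact hcond γ
    have hk : (0:ℝ) ≤ δ / predErr r β P := div_nonneg hδ hpe.le
    have heq : ∀ z : Pt d,
        |σ * (δ * (z.2 - dot z.1 β) / predErr r β P) +
          (δ * (z.2 - dot z.1 β) / predErr r β P) * c| ^ r
        = ((δ / predErr r β P) ^ r * |σ + c| ^ r) * |z.2 - dot z.1 β| ^ r := by
      intro z
      have h1 : σ * (δ * (z.2 - dot z.1 β) / predErr r β P) +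
          (δ * (z.2 - dot z.1 β) / predErr r β P) * c
          = (δ / predErr r β P) * ((σ + c) * (z.2 - dot z.1 β)) := by ring
      rw [h1, abs_mul, abs_mul, abs_of_nonneg hk,
        Real.mul_rpow hk (by positivity), Real.mul_rpow (abs_nonneg _) (abs_nonneg _)]
      ring
    have hInt : (∫ z, |σ * (δ * (z.2 - dot z.1 β) / predErr r β P) +
          (δ * (z.2 - dot z.1 β) / predErr r β P) * c| ^ r ∂P)
        = ((δ / predErr r β P) ^ r * |σ + c| ^ r) * lossInt r β P := by
      simp_rw [heq]
      rw [MeasureTheory.integral_const_mul]; rfl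
    rw [hInt]
    have hdiv : (δ / predErr r β P) ^ r = δ ^ r / lossInt r β P := by
      rw [Real.div_rpow hδ hpe.le, hper]
    rw [hdiv]
    have h2 : δ ^ r / lossInt r β P * |σ + c| ^ r * lossInt r β P
        = δ ^ r * |σ + c| ^ r := by
      field_simp
    rw [h2]
    have h3 : |σ + c| ≤ σ + ρ γ := by
      calc |σ + c| ≤ |σ| + |c| := abs_add_le _ _
        _ ≤ σ + ρ γ := by
            rw [abs_of_nonneg (by linarith : (0:ℝ) ≤ σ)]; linarith
    calc δ ^ r * |σ + c| ^ r ≤ δ ^ r * (σ + ρ γ) ^ r := by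
          apply mul_le_mul_of_nonneg_left _ (Real.rpow_nonneg hδ r)
          exact Real.rpow_le_rpow (abs_nonneg _) h3 hr0.le
      _ = (δ * (σ + ρ γ)) ^ r := (Real.mul_rpow hδ (by linarith [hρ γ])).symm
  refine ⟨key, ?_⟩
  -- Part 2
  set T : Pt d → Pt d := fun z =>
    ((fun j => z.1 j - (δ * (z.2 - dot z.1 β) / predErr r β P) * adj ρ β βs j : Vec d),
      z.2 + σ * (δ * (z.2 - dot z.1 β) / predErr r β P)) with hT
  have hdotm : Measurable fun z : Pt d => dot z.1 β := by
    unfold dot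
    exact Finset.measurable_sum _ fun j _ =>
      (((measurable_pi_apply j).comp measurable_fst).mul measurable_const)
  have hTm : Measurable T := by
    rw [hT]
    refine Measurable.prod ?_ ?_
    · exact measurable_pi_lambda _ fun j =>
        (((measurable_pi_apply j).comp measurable_fst).sub
          (((measurable_const.mul (measurable_snd.sub hdotm)).div measurable_const).mul
            measurable_const))
    · exact measurable_snd.add
        (measurable_const.mul ((measurable_const.mul (measurable_snd.sub hdotm)).div
          measurable_const))
  have hgm : Measurable fun z : Pt d => (z, T z) := measurable_id.prod hTm
  set π₀ : Measure (Pt d × Pt d) := P.map (fun z => (z, T z)) with hπ₀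
  have hmem : π₀ ∈ couplings P (P.map T) := by
    constructor
    · rw [hπ₀, Measure.map_map measurable_fst hgm]
      have h : (Prod.fst ∘ fun z : Pt d => (z, T z)) = id := rfl
      rw [h, Measure.map_id]
    · rw [hπ₀, Measure.map_map measurable_snd hgm]
      rfl
  rw [MSW]
  refine Real.iSup_le (fun γ => ?_) hδ
  have hσγ : (0:ℝ) < σ + ρ γ := by linarith [hρ γ]
  rw [div_le_iff₀ hσγ]
  have hfm : Measurable fun w : Pt d × Pt d =>
      |(w.2.2 - w.1.2) + dot (w.1.1 - w.2.1) γ| ^ r := by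
    apply (Real.continuous_rpow_const hr0.le).measurable.comp
    apply Measurable.abs
    refine Measurable.add ((measurable_snd.comp measurable_snd).sub
      (measurable_snd.comp measurable_fst)) ?_
    unfold dot
    exact Finset.measurable_sum _ fun j _ =>
      ((((measurable_pi_apply j).comp (measurable_fst.comp measurable_fst)).sub
        ((measurable_pi_apply j).comp (measurable_fst.comp measurable_snd))).mul
        measurable_const)
  have hbdd : BddBelow (Set.range fun π => ⨅ (_ : π ∈ couplings P (P.map T)),
      (∫ w, |(w.2.2 - w.1.2) + dot (w.1.1 - w.2.1) γ| ^ r ∂π) ^ (1 / r)) := by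
    refine ⟨0, ?_⟩
    rintro x ⟨π, rfl⟩
    exact Real.iInf_nonneg fun _ => Real.rpow_nonneg
      (MeasureTheory.integral_nonneg fun w => Real.rpow_nonneg (abs_nonneg _) r) _
  refine ciInf_le_of_le hbdd π₀ ?_
  rw [ciInf_pos hmem]
  have hmap : (∫ w, |(w.2.2 - w.1.2) + dot (w.1.1 - w.2.1) γ| ^ r ∂π₀)
      = ∫ z, |σ * (δ * (z.2 - dot z.1 β) / predErr r β P) +
          (δ * (z.2 - dot z.1 β) / predErr r β P) * dot (adj ρ β βs) γ| ^ r ∂P := by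
    rw [hπ₀, MeasureTheory.integral_map hgm.aemeasurable hfm.aestronglyMeasurable]
    apply MeasureTheory.integral_congr_ae
    filter_upwards with z
    congr 1
    have hs : ∑ j, (z.1 - (T z).1) j * γ j
        = (δ * (z.2 - dot z.1 β) / predErr r β P) * ∑ j, adj ρ β βs j * γ j := by
      rw [Finset.mul_sum]
      apply Finset.sum_congr rfl
      intro j _
      simp only [hT, Pi.sub_apply]
      ring
    show |(T z).2 - z.2 + dot (z.1 - (T z).1) γ| = _
    rw [dot, hs]
    have h2 : (T z).2 - z.2 = σ * (δ * (z.2 - dot z.1 β) / predErr r β P) := by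
      simp only [hT]; ring
    rw [h2]
    rfl
  rw [hmap]
  calc (∫ z, |σ * (δ * (z.2 - dot z.1 β) / predErr r β P) +
          (δ * (z.2 - dot z.1 β) / predErr r β P) * dot (adj ρ β βs) γ| ^ r ∂P) ^ (1 / r)
      ≤ ((δ * (σ + ρ γ)) ^ r) ^ (1 / r) := by
        apply Real.rpow_le_rpow
          (MeasureTheory.integral_nonneg fun z => Real.rpow_nonneg (abs_nonneg _) r)
          (key γ) (by positivity)
    _ = δ * (σ + ρ γ) := by
        rw [one_div, Real.rpow_rpow_inv (by positivity) hr0.ne']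
end
end

section
/- Let F and G be cumulative distribution functions on ℝ whose corresponding distributions are supported in an interval of length c ≥ 0, and let r ≥ 1. Then ∫₀¹ |F⁻¹(p) − G⁻¹(p)|^r dp ≤ c^{r−1} ∫_ℝ |F(t) − G(t)| dt, i.e., W_r(P,Q)^r ≤ c^{r−1} W₁(P,Q) for the one-dimensional Wasserstein distances. -/
open MeasureTheory ProbabilityTheory

noncomputable section

/-- The generalized inverse (quantile function) of the cdf of a measure on ℝ. -/
def quantile (P : Measure ℝ) (p : ℝ) : ℝ :=
  sInf {x : ℝ | p ≤ cdf P x}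

/-! Slicing the symmetric difference of the regions `{(p, t) | p ≤ F t}` and `{(p, t) | p ≤ G t}`
horizontally and vertically gives `∫₀¹ |F⁻¹ - G⁻¹| = ∫ |F - G|`. On `(0, 1)` both quantile
functions take values in `[a, a + c]`, so `|F⁻¹ - G⁻¹| ^ r ≤ c ^ (r - 1) * |F⁻¹ - G⁻¹|` there. -/

open Set Filter
open scoped symmDiff

namespace Set

variable {α : Type*} [LinearOrder α]

theorem Ici_symmDiff_Ici (a b : α) : Ici a ∆ Ici b = Ico (min a b) (max a b) := by
  rcases le_total a b with h | h
  · rw [symmDiff_of_ge (Ici_subset_Ici.mpr h), Ici_sdiff_Ici, min_eq_left h, max_eq_right h]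
  · rw [symmDiff_of_le (Ici_subset_Ici.mpr h), Ici_sdiff_Ici, min_eq_right h, max_eq_left h]

theorem Iic_symmDiff_Iic (a b : α) : Iic a ∆ Iic b = uIoc a b := by
  rcases le_total a b with h | h
  · rw [symmDiff_of_le (Iic_subset_Iic.mpr h), Iic_sdiff_Iic, uIoc_of_le h]
  · rw [symmDiff_of_ge (Iic_subset_Iic.mpr h), Iic_sdiff_Iic, uIoc_of_ge h]

end Set

theorem Real.volume_Ici_symmDiff_Ici (a b : ℝ) :
    volume (Ici a ∆ Ici b) = ENNReal.ofReal |a - b| := by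
  rw [Set.Ici_symmDiff_Ici, Real.volume_Ico, max_sub_min_eq_abs']

theorem Real.volume_restrict_Ioo_Iic_symmDiff_Iic {a b : ℝ} (ha : a ∈ Icc 0 1)
    (hb : b ∈ Icc 0 1) :
    volume.restrict (Ioo 0 1) (Iic a ∆ Iic b) = ENNReal.ofReal |a - b| := by
  have hsub : uIoc a b ⊆ Ioc 0 1 := Ioc_subset_Ioc (le_min ha.1 hb.1) (max_le ha.2 hb.2)
  rw [Measure.restrict_congr_set Ioo_ae_eq_Ioc, Measure.restrict_apply' measurableSet_Ioc,
    Set.Iic_symmDiff_Iic, inter_eq_left.mpr hsub, Real.volume_uIoc, abs_sub_comm]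

section Quantile

variable {P : Measure ℝ} {p x a b : ℝ}

theorem bddBelow_setOf_le_cdf (hp : 0 < p) : BddBelow {x | p ≤ cdf P x} := by
  obtain ⟨x₀, hx₀⟩ := ((tendsto_cdf_atBot P).eventually (gt_mem_nhds hp)).exists_forall_of_atBot
  exact ⟨x₀, fun x hx => le_of_not_gt fun hlt => (hx₀ x hlt.le).not_ge hx⟩

theorem nonempty_setOf_le_cdf (hp : p < 1) : {x | p ≤ cdf P x}.Nonempty :=
  ((tendsto_cdf_atTop P).eventually (le_mem_nhds hp)).exists

theorem quantile_le_iff (hp : p ∈ Ioo 0 1) : quantile P p ≤ x ↔ p ≤ cdf P x := by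
  refine ⟨fun h => ?_, fun h => csInf_le (bddBelow_setOf_le_cdf hp.1) h⟩
  -- the infimum is attained because the cdf is right-continuous
  refine (monotone_cdf P h).trans' ?_
  rw [← StieltjesFunction.iInf_Ioi_eq]
  refine le_ciInf fun ⟨y, hy⟩ => ?_
  obtain ⟨s, hs, hsy⟩ := exists_lt_of_csInf_lt (nonempty_setOf_le_cdf hp.2) hy
  exact hs.trans (monotone_cdf P hsy.le)

theorem le_cdf_quantile (hp : p ∈ Ioo 0 1) : p ≤ cdf P (quantile P p) :=
  (quantile_le_iff hp).mp le_rfl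

theorem monotoneOn_quantile : MonotoneOn (quantile P) (Ioo 0 1) :=
  fun _ hp _ hq hpq => (quantile_le_iff hp).mpr (hpq.trans (le_cdf_quantile hq))

theorem cdf_eq_zero_of_lt [IsProbabilityMeasure P] (hP : P (Icc a b) = 1) (hx : x < a) :
    cdf P x = 0 := by
  have hnull : P (Iic x) = 0 := measure_mono_null
    (fun t (ht : t ≤ x) (hmem : t ∈ Icc a b) => (hmem.1.trans ht).not_gt hx)
    ((prob_compl_eq_zero_iff measurableSet_Icc).mpr hP)
  rw [cdf_eq_real, measureReal_def, hnull, ENNReal.toReal_zero]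

theorem cdf_eq_one_of_le [IsProbabilityMeasure P] (hP : P (Icc a b) = 1) (hx : b ≤ x) :
    cdf P x = 1 := by
  have hone : P (Iic x) = 1 :=
    le_antisymm prob_le_one (hP ▸ measure_mono fun t ht => ht.2.trans hx)
  rw [cdf_eq_real, measureReal_def, hone, ENNReal.toReal_one]

theorem quantile_mem_Icc [IsProbabilityMeasure P] (hP : P (Icc a b) = 1) (hp : p ∈ Ioo 0 1) :
    quantile P p ∈ Icc a b := by
  refine ⟨le_of_not_gt fun hlt => ?_, (quantile_le_iff hp).mpr ?_⟩
  · have := le_cdf_quantile (P := P) hp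
    rw [cdf_eq_zero_of_lt hP hlt] at this
    exact this.not_gt hp.1
  · rw [cdf_eq_one_of_le hP le_rfl]
    exact hp.2.le

end Quantile

theorem aestronglyMeasurable_abs_quantile_sub (P Q : Measure ℝ) :
    AEStronglyMeasurable (fun p => |quantile P p - quantile Q p|) (volume.restrict (Ioo 0 1)) :=
  ((aemeasurable_restrict_of_monotoneOn measurableSet_Ioo monotoneOn_quantile).sub
    (aemeasurable_restrict_of_monotoneOn measurableSet_Ioo monotoneOn_quantile)).abs
    |>.aestronglyMeasurable

def cdfSubgraph (P : Measure ℝ) : Set (ℝ × ℝ) := {z | z.1 ≤ cdf P z.2}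

theorem measurableSet_cdfSubgraph (P : Measure ℝ) : MeasurableSet (cdfSubgraph P) :=
  measurableSet_le measurable_fst ((monotone_cdf P).measurable.comp measurable_snd)

theorem prodMk_left_preimage_cdfSubgraph {P : Measure ℝ} {p : ℝ} (hp : p ∈ Ioo 0 1) :
    Prod.mk p ⁻¹' cdfSubgraph P = Ici (quantile P p) :=
  ext fun _ => (quantile_le_iff hp).symm

theorem prodMk_right_preimage_cdfSubgraph (P : Measure ℝ) (t : ℝ) :
    (fun p => (p, t)) ⁻¹' cdfSubgraph P = Iic (cdf P t) :=
  rfl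

theorem lintegral_abs_quantile_sub (P Q : Measure ℝ) :
    ∫⁻ p in Ioo 0 1, ENNReal.ofReal |quantile P p - quantile Q p|
      = ∫⁻ t, ENNReal.ofReal |cdf P t - cdf Q t| := by
  set A := cdfSubgraph P ∆ cdfSubgraph Q
  have hA : MeasurableSet A :=
    (measurableSet_cdfSubgraph P).symmDiff (measurableSet_cdfSubgraph Q)
  calc ∫⁻ p in Ioo 0 1, ENNReal.ofReal |quantile P p - quantile Q p|
      = ∫⁻ p in Ioo 0 1, volume (Prod.mk p ⁻¹' A) :=
        setLIntegral_congr_fun measurableSet_Ioo fun p hp => by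
          rw [preimage_symmDiff, prodMk_left_preimage_cdfSubgraph hp,
            prodMk_left_preimage_cdfSubgraph hp, Real.volume_Ici_symmDiff_Ici]
    _ = (volume.restrict (Ioo 0 1)).prod volume A := (Measure.prod_apply hA).symm
    _ = ∫⁻ t, volume.restrict (Ioo 0 1) ((fun p => (p, t)) ⁻¹' A) := Measure.prod_apply_symm hA
    _ = ∫⁻ t, ENNReal.ofReal |cdf P t - cdf Q t| := lintegral_congr fun t => by
        rw [preimage_symmDiff, prodMk_right_preimage_cdfSubgraph,
          prodMk_right_preimage_cdfSubgraph, Real.volume_restrict_Ioo_Iic_symmDiff_Iic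
            ⟨cdf_nonneg P t, cdf_le_one P t⟩ ⟨cdf_nonneg Q t, cdf_le_one Q t⟩]

theorem integral_abs_quantile_sub (P Q : Measure ℝ) :
    ∫ p in Ioo 0 1, |quantile P p - quantile Q p| = ∫ t, |cdf P t - cdf Q t| := by
  rw [integral_eq_lintegral_of_nonneg_ae (Eventually.of_forall fun _ => abs_nonneg _)
      (aestronglyMeasurable_abs_quantile_sub P Q),
    integral_eq_lintegral_of_nonneg_ae (f := fun t => |cdf P t - cdf Q t|)
      (Eventually.of_forall fun _ => abs_nonneg _)
      ((monotone_cdf P).measurable.sub (monotone_cdf Q).measurable).abs.aestronglyMeasurable,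
    lintegral_abs_quantile_sub]

theorem Real.rpow_le_rpow_sub_one_mul {x c r : ℝ} (hx : 0 ≤ x) (hxc : x ≤ c) (hr : 1 ≤ r) :
    x ^ r ≤ c ^ (r - 1) * x :=
  calc x ^ r = x ^ (r - 1) * x := by
        rw [← Real.rpow_add_one' hx (by linarith), sub_add_cancel]
    _ ≤ c ^ (r - 1) * x :=
        mul_le_mul_of_nonneg_right (Real.rpow_le_rpow hx hxc (sub_nonneg.mpr hr)) hx

theorem quantile_Wr_le_W1_general (P Q : Measure ℝ)
    [IsProbabilityMeasure P] [IsProbabilityMeasure Q]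
    (r c a : ℝ) (hr : 1 ≤ r)
    (hP : P (Set.Icc a (a + c)) = 1) (hQ : Q (Set.Icc a (a + c)) = 1) :
    (∫ p in Set.Ioo (0 : ℝ) 1, |quantile P p - quantile Q p| ^ r)
      ≤ c ^ (r - 1) * ∫ t : ℝ, |cdf P t - cdf Q t| := by
  have hbound : ∀ p ∈ Ioo 0 1, |quantile P p - quantile Q p| ≤ c := fun p hp => by
    simpa [Real.dist_eq] using
      Real.dist_le_of_mem_Icc (quantile_mem_Icc hP hp) (quantile_mem_Icc hQ hp)
  have hint : IntegrableOn (fun p => |quantile P p - quantile Q p|) (Ioo 0 1) :=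
    .of_bound measure_Ioo_lt_top (aestronglyMeasurable_abs_quantile_sub P Q) c
      (ae_restrict_of_forall_mem measurableSet_Ioo fun p hp => by simpa using hbound p hp)
  calc ∫ p in Ioo 0 1, |quantile P p - quantile Q p| ^ r
      ≤ ∫ p in Ioo 0 1, c ^ (r - 1) * |quantile P p - quantile Q p| :=
        integral_mono_of_nonneg (Eventually.of_forall fun _ => by positivity) (hint.const_mul _)
          (ae_restrict_of_forall_mem measurableSet_Ioo fun p hp =>
            Real.rpow_le_rpow_sub_one_mul (abs_nonneg _) (hbound p hp) hr)
    _ = c ^ (r - 1) * ∫ p in Ioo 0 1, |quantile P p - quantile Q p| := integral_const_mul _ _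
    _ = c ^ (r - 1) * ∫ t, |cdf P t - cdf Q t| := by rw [integral_abs_quantile_sub]

/-- for distributions supported in a common interval of length c,
W_r(P,Q)^r = ∫₀¹ |F⁻¹ − G⁻¹|^r ≤ c^{r−1} ∫ |F − G| = c^{r−1} W₁(P,Q). -/
theorem quantile_Wr_le_W1 (P Q : Measure ℝ)
    [IsProbabilityMeasure P] [IsProbabilityMeasure Q]
    (r c a : ℝ) (hr : 1 ≤ r) (hc : 0 ≤ c)
    (hP : P (Set.Icc a (a + c)) = 1) (hQ : Q (Set.Icc a (a + c)) = 1) :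
    (∫ p in Set.Ioo (0 : ℝ) 1, |quantile P p - quantile Q p| ^ r)
      ≤ c ^ (r - 1) * ∫ t : ℝ, |cdf P t - cdf Q t| :=
  quantile_Wr_le_W1_general P Q r c a hr hP hQ
end
end
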